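/- Let P_s be a sign pattern on n nodes and let V_C ⊆ V be a positive signed zero forcing set of P_s. Then for every A ∈ Q_s(P_s), every real λ > 0, and every ν ∈ ℝ^n with ν^T A = λ ν^T and ν_j = 0 for all j ∈ V_C, one has ν = 0. By the PBH test, this means every positive eigenvalue of every A ∈ Q_s(P_s) is a controllable eigenvalue of the pair (A, B), where B has columns e_j for j ∈ V_C. -/

import Mathlib

/-- An entry of a sign pattern: `+`, `-`, `0`, or `?` (unrestricted). -/
inductive SignPatEntry : Type
  | pos | neg | zero | unk
deriving DecidableEq

namespace SignPatEntry

/-- Sign inversion: `inv(+) = -`, `inv(-) = +`. -/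
def inv : SignPatEntry → SignPatEntry
  | pos => neg
  | neg => pos
  | zero => zero
  | unk => unk

/-- Product of signs (used as `s · P(u,v)`). -/
def mul : SignPatEntry → SignPatEntry → SignPatEntry
  | pos, y => y
  | neg, y => y.inv
  | zero, _ => zero
  | unk, _ => unk

end SignPatEntry

/-- A real number matches a sign-pattern entry. -/
def matchesSign : SignPatEntry → ℝ → Prop
  | .pos, a => 0 < a
  | .neg, a => a < 0
  | .zero, a => a = 0
  | .unk, _ => True

/-- The qualitative class of a sign pattern: real matrices whose entries have
the prescribed signs. -/
def QClass {n : ℕ} (P : Fin n → Fin n → SignPatEntry)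
    (A : Matrix (Fin n) (Fin n) ℝ) : Prop :=
  ∀ i j : Fin n, matchesSign (P i j) (A i j)

/-- A configuration of the signing-and-coloring game: a set of black nodes and a
partial marking of nodes with signs. -/
structure Config (n : ℕ) where
  black : Finset (Fin n)
  mark : Fin n → Option SignPatEntry

/-- The set of white out-neighbors of `v` (out-neighbors of `v` are the `u` with
`P u v ≠ 0`). -/
def Wset {n : ℕ} (P : Fin n → Fin n → SignPatEntry) (c : Config n) (v : Fin n) :
    Finset (Fin n) :=
  Finset.univ.filter (fun u => u ∉ c.black ∧ P u v ≠ SignPatEntry.zero)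

/-- One step of the signing and coloring rule, played on the pattern `P`. -/
inductive Step {n : ℕ} (P : Fin n → Fin n → SignPatEntry) : Config n → Config n → Prop
  /-- (1) a pivot node `v` with a single white out-neighbor `u` forces `u` black. -/
  | force1 (c : Config n) (v u : Fin n)
      (hv : v ∈ c.black ∨ P v v ≠ SignPatEntry.unk)
      (hW : Wset P c v = {u}) :
      Step P c ⟨insert u c.black, c.mark⟩
  /-- (2) if all white out-neighbors of a pivot `v` are marked consistently
  (all with `m(u) = P(u,v)` or all with `m(u) = -P(u,v)`), they all become black. -/
  | force2 (c : Config n) (v : Fin n)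
      (hv : v ∈ c.black ∨ P v v ≠ SignPatEntry.unk)
      (hall : (∀ u ∈ Wset P c v, c.mark u = some (P u v)) ∨
              (∀ u ∈ Wset P c v, c.mark u = some (P u v).inv)) :
      Step P c ⟨c.black ∪ Wset P c v, c.mark⟩
  /-- (3) if exactly one white out-neighbor `w` of a pivot `v` is unmarked, at least one
  is marked, and every marked one satisfies `m(u) = s · P(u,v)`, then `w` gets
  marked with `-s · P(w,v)`. -/
  | force3 (c : Config n) (v w : Fin n) (s : SignPatEntry)
      (hv : v ∈ c.black ∨ P v v ≠ SignPatEntry.unk)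
      (hs : s = SignPatEntry.pos ∨ s = SignPatEntry.neg)
      (hw : w ∈ Wset P c v) (hwnone : c.mark w = none)
      (hmarked : ∀ u ∈ Wset P c v, u ≠ w → c.mark u = some (s.mul (P u v)))
      (hex : ∃ u ∈ Wset P c v, u ≠ w) :
      Step P c ⟨c.black, Function.update c.mark w (some (s.inv.mul (P w v)))⟩
  /-- (4) if no white node is marked, an arbitrary white node may be marked `+`. -/
  | force4 (c : Config n) (u : Fin n)
      (hnomark : ∀ x : Fin n, x ∉ c.black → c.mark x = none)
      (hu : u ∉ c.black) :
      Step P c ⟨c.black, Function.update c.mark u (some SignPatEntry.pos)⟩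

/-- The initial configuration: black set `Z`, no marks. -/
def initConfig {n : ℕ} (Z : Finset (Fin n)) : Config n := ⟨Z, fun _ => none⟩

/-- `Z` is a signed zero forcing set of the pattern `P`. -/
def SignedZFS {n : ℕ} (P : Fin n → Fin n → SignPatEntry) (Z : Finset (Fin n)) : Prop :=
  ∃ c : Config n, Relation.ReflTransGen (Step P) (initConfig Z) c ∧ c.black = Finset.univ

/-- The negative looped pattern `P⁻`: off-diagonal as `P`; diagonal `-` if
`P i i ∈ {0,-}`, and `?` if `P i i ∈ {+,?}`. -/
def negLooped {n : ℕ} (P : Fin n → Fin n → SignPatEntry) :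
    Fin n → Fin n → SignPatEntry := fun i j =>
  if i = j then
    (match P i i with
      | SignPatEntry.zero => SignPatEntry.neg
      | SignPatEntry.neg => SignPatEntry.neg
      | _ => SignPatEntry.unk)
  else P i j

/-- The positive looped pattern `P⁺`: off-diagonal as `P`; diagonal `+` if
`P i i ∈ {0,+}`, and `?` if `P i i ∈ {-,?}`. -/
def posLooped {n : ℕ} (P : Fin n → Fin n → SignPatEntry) :
    Fin n → Fin n → SignPatEntry := fun i j =>
  if i = j then
    (match P i i with
      | SignPatEntry.zero => SignPatEntry.pos
      | SignPatEntry.pos => SignPatEntry.pos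
      | _ => SignPatEntry.unk)
  else P i j

/-- The sign of a real number, as a sign-pattern entry. -/
noncomputable def sgnR (x : ℝ) : SignPatEntry :=
  if 0 < x then SignPatEntry.pos else if x < 0 then SignPatEntry.neg else SignPatEntry.zero

/-!
If `νᵀ A = λ νᵀ` with `λ > 0`, then `ν` is a left null vector of `M = A - λ I`, and `M` lies in
the qualitative class of `P⁻`: the shift makes every diagonal entry prescribed `0` or `-`
strictly negative. Column `v` of `νᵀ M = 0` reads `∑ ν_u M_{uv} = 0`, where only white
out-neighbours `u` of `v` contribute, each with `M_{uv}` of known sign. Along the game, black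
nodes carry `ν = 0` and marks record the signs of `ν` up to one global factor: in a vanishing
sum of terms of known sign all terms vanish (rules 1, 2), and if all terms but one have a
known sign, the last one has the opposite sign (rule 3). A complex left eigenvector is handled
through its real and imaginary parts.
-/

namespace SignPatEntry

def toReal : SignPatEntry → ℝ
  | pos => 1
  | neg => -1
  | zero => 0
  | unk => 0

@[simp]
lemma toReal_inv (s : SignPatEntry) : s.inv.toReal = -s.toReal := by
  cases s <;> simp [inv, toReal]

@[simp]
lemma toReal_mul (s t : SignPatEntry) : (s.mul t).toReal = s.toReal * t.toReal := by
  cases s <;> cases t <;> simp [mul, inv, toReal]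

lemma toReal_mul_self {s : SignPatEntry} (h0 : s ≠ zero) (hu : s ≠ unk) :
    s.toReal * s.toReal = 1 := by
  cases s <;> simp_all [toReal]

lemma toReal_mul_pos_of_matchesSign {s : SignPatEntry} {x : ℝ} (h0 : s ≠ zero)
    (hu : s ≠ unk) (hx : matchesSign s x) : 0 < s.toReal * x := by
  cases s <;> simp_all [toReal, matchesSign]

end SignPatEntry

section SignedSums

lemma mul_nonneg_of_sign_mul_nonneg {τ q x m : ℝ} (hq : q * q = 1) (hx : 0 ≤ τ * q * x)
    (hm : 0 < q * m) : 0 ≤ τ * (x * m) := by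
  have : τ * (x * m) = (τ * q * x) * (q * m) := by linear_combination (-(τ * x * m)) * hq
  rw [this]
  exact mul_nonneg hx hm.le

variable {ι : Type*} {W : Finset ι} {x m q : ι → ℝ} {τ : ℝ}

lemma eq_zero_of_sum_mul_eq_zero (hτ : τ ≠ 0) (hq : ∀ u ∈ W, q u * q u = 1)
    (hm : ∀ u ∈ W, 0 < q u * m u) (hsum : ∑ u ∈ W, x u * m u = 0)
    (hx : ∀ u ∈ W, 0 ≤ τ * q u * x u) : ∀ u ∈ W, x u = 0 := by
  have hterms : ∀ u ∈ W, 0 ≤ τ * (x u * m u) := fun u hu =>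
    mul_nonneg_of_sign_mul_nonneg (hq u hu) (hx u hu) (hm u hu)
  have hτsum : ∑ u ∈ W, τ * (x u * m u) = 0 := by rw [← Finset.mul_sum, hsum, mul_zero]
  intro u hu
  have hm0 : m u ≠ 0 := by rintro h; simpa [h] using hm u hu
  have := (Finset.sum_eq_zero_iff_of_nonneg hterms).mp hτsum u hu
  simpa [hτ, hm0] using this

lemma sign_mul_nonpos_of_sum_mul_eq_zero [DecidableEq ι] {w : ι} (hw : w ∈ W)
    (hq : ∀ u ∈ W, q u * q u = 1)
    (hm : ∀ u ∈ W, 0 < q u * m u) (hsum : ∑ u ∈ W, x u * m u = 0)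
    (hx : ∀ u ∈ W, u ≠ w → 0 ≤ τ * q u * x u) : τ * q w * x w ≤ 0 := by
  have hrest : 0 ≤ ∑ u ∈ W.erase w, τ * (x u * m u) := Finset.sum_nonneg fun u hu =>
    have ⟨hne, hu⟩ := Finset.mem_erase.mp hu
    mul_nonneg_of_sign_mul_nonneg (hq u hu) (hx u hu hne) (hm u hu)
  rw [← Finset.mul_sum] at hrest
  have hsplit := Finset.add_sum_erase W (fun u => x u * m u) hw
  rw [hsum] at hsplit
  have hwm : (τ * q w * x w) * (q w * m w) ≤ 0 := by
    linear_combination (τ * x w * m w) * hq w hw + τ * hsplit + hrest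
  exact nonpos_of_mul_nonpos_left hwm (hm w hw)

end SignedSums

section SignedZeroForcing

open SignPatEntry

variable {n : ℕ} {Q : Fin n → Fin n → SignPatEntry} {c c' : Config n} {u v : Fin n}

lemma ne_zero_of_mem_wset (hu : u ∈ Wset Q c v) : Q u v ≠ zero :=
  (Finset.mem_filter.mp hu).2.2

lemma ne_unk_of_mem_wset (hQ : ∀ i j, i ≠ j → Q i j ≠ unk)
    (hv : v ∈ c.black ∨ Q v v ≠ unk) (hu : u ∈ Wset Q c v) : Q u v ≠ unk := by
  rcases eq_or_ne u v with rfl | huv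
  · exact hv.resolve_left (Finset.mem_filter.mp hu).2.1
  · exact hQ u v huv

lemma toReal_mul_self_of_mem_wset (hQ : ∀ i j, i ≠ j → Q i j ≠ unk)
    (hv : v ∈ c.black ∨ Q v v ≠ unk) (hu : u ∈ Wset Q c v) :
    (Q u v).toReal * (Q u v).toReal = 1 :=
  toReal_mul_self (ne_zero_of_mem_wset hu) (ne_unk_of_mem_wset hQ hv hu)

lemma toReal_mul_pos_of_mem_wset (hQ : ∀ i j, i ≠ j → Q i j ≠ unk)
    {M : Matrix (Fin n) (Fin n) ℝ} (hM : QClass Q M)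
    (hv : v ∈ c.black ∨ Q v v ≠ unk) (hu : u ∈ Wset Q c v) : 0 < (Q u v).toReal * M u v :=
  toReal_mul_pos_of_matchesSign (ne_zero_of_mem_wset hu) (ne_unk_of_mem_wset hQ hv hu) (hM u v)

variable {M : Matrix (Fin n) (Fin n) ℝ} {ν : Fin n → ℝ}

lemma sum_wset_mul_eq_zero (hM : QClass Q M) (hν : Matrix.vecMul ν M = 0)
    (hblack : ∀ u ∈ c.black, ν u = 0) (v : Fin n) : ∑ u ∈ Wset Q c v, ν u * M u v = 0 := by
  rw [Finset.sum_subset (Finset.subset_univ _)]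
  · simpa [Matrix.vecMul, dotProduct] using congrFun hν v
  · intro u _ hu
    simp only [Wset, Finset.mem_filter, Finset.mem_univ, true_and, not_and, not_not] at hu
    by_cases hb : u ∈ c.black
    · simp [hblack u hb]
    · have hMuv : M u v = 0 := by simpa [hu hb, matchesSign] using hM u v
      simp [hMuv]

def Config.IsCompatible (ν : Fin n → ℝ) (c : Config n) : Prop :=
  (∀ u ∈ c.black, ν u = 0) ∧
    ∃ ε : ℝ, ε ≠ 0 ∧ ∀ u s, c.mark u = some s → 0 ≤ ε * s.toReal * ν u

lemma isCompatible_initConfig {Z : Finset (Fin n)} (hZ : ∀ j ∈ Z, ν j = 0) :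
    (initConfig Z).IsCompatible ν :=
  ⟨hZ, 1, one_ne_zero, fun _ _ h => by simp [initConfig] at h⟩

lemma isCompatible_update_mark {ε : ℝ} (hblack : ∀ u ∈ c.black, ν u = 0) (hε : ε ≠ 0)
    (hmark : ∀ u s, c.mark u = some s → 0 ≤ ε * s.toReal * ν u) {w : Fin n} {t : SignPatEntry}
    (hw : 0 ≤ ε * t.toReal * ν w) :
    Config.IsCompatible ν ⟨c.black, Function.update c.mark w (some t)⟩ := by
  refine ⟨hblack, ε, hε, fun u s hus => ?_⟩
  rcases eq_or_ne u w with rfl | huw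
  · simp only [Function.update_self, Option.some.injEq] at hus
    rwa [← hus]
  · simp only [Function.update_of_ne huw] at hus
    exact hmark u s hus

lemma Config.IsCompatible.step (hQ : ∀ i j, i ≠ j → Q i j ≠ unk) (hM : QClass Q M)
    (hν : Matrix.vecMul ν M = 0) (hstep : Step Q c c') (hc : c.IsCompatible ν) :
    c'.IsCompatible ν := by
  obtain ⟨hblack, ε, hε, hmark⟩ := hc
  have hsum := sum_wset_mul_eq_zero hM hν hblack
  have hq : ∀ v, v ∈ c.black ∨ Q v v ≠ unk →
      ∀ u ∈ Wset Q c v, (Q u v).toReal * (Q u v).toReal = 1 :=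
    fun _ hv _ => toReal_mul_self_of_mem_wset hQ hv
  have hm : ∀ v, v ∈ c.black ∨ Q v v ≠ unk → ∀ u ∈ Wset Q c v, 0 < (Q u v).toReal * M u v :=
    fun _ hv _ => toReal_mul_pos_of_mem_wset hQ hM hv
  cases hstep with
  | force1 v u hv hW =>
    have hMuv : M u v ≠ 0 :=
      right_ne_zero_of_mul (hm v hv u (hW ▸ Finset.mem_singleton_self u)).ne'
    have hνu : ν u = 0 := by simpa [hW, hMuv] using hsum v
    refine ⟨fun x hx => ?_, ε, hε, hmark⟩
    rcases Finset.mem_insert.mp hx with rfl | hx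
    exacts [hνu, hblack x hx]
  | force2 v hv hall =>
    have hW : ∀ u ∈ Wset Q c v, ν u = 0 := by
      rcases hall with hall | hall
      · exact eq_zero_of_sum_mul_eq_zero hε (hq v hv) (hm v hv) (hsum v) fun u hu =>
          hmark u _ (hall u hu)
      · exact eq_zero_of_sum_mul_eq_zero (neg_ne_zero.mpr hε) (hq v hv) (hm v hv) (hsum v)
          fun u hu => by simpa using hmark u _ (hall u hu)
    refine ⟨fun x hx => ?_, ε, hε, hmark⟩
    rcases Finset.mem_union.mp hx with hx | hx
    exacts [hblack x hx, hW x hx]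
  | force3 v w s hv _ hw _ hmarked _ =>
    have hopp := sign_mul_nonpos_of_sum_mul_eq_zero (τ := ε * s.toReal) hw (hq v hv)
      (hm v hv) (hsum v) fun x hx hxw => by simpa [mul_assoc] using hmark x _ (hmarked x hx hxw)
    refine isCompatible_update_mark hblack hε hmark ?_
    simp only [toReal_mul, toReal_inv]
    linear_combination hopp
  | force4 u hnomark _ =>
    obtain ⟨ε', hε', hε'u⟩ : ∃ ε' : ℝ, ε' ≠ 0 ∧ 0 ≤ ε' * ν u :=
      ⟨if ν u < 0 then -1 else 1, by split_ifs <;> norm_num, by split_ifs <;> linarith⟩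
    refine isCompatible_update_mark hblack hε' (fun x t hxt => ?_) (by simpa [toReal] using hε'u)
    by_cases hb : x ∈ c.black
    · simp [hblack x hb]
    · simp [hnomark x hb] at hxt

lemma Config.IsCompatible.of_reflTransGen (hQ : ∀ i j, i ≠ j → Q i j ≠ unk)
    (hM : QClass Q M) (hν : Matrix.vecMul ν M = 0)
    (hreach : Relation.ReflTransGen (Step Q) c c') (hc : c.IsCompatible ν) :
    c'.IsCompatible ν := by
  induction hreach with
  | refl => exact hc
  | tail _ hstep ih => exact ih.step hQ hM hν hstep

theorem eq_zero_of_vecMul_eq_zero_of_signedZFS (hQ : ∀ i j, i ≠ j → Q i j ≠ unk)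
    (hM : QClass Q M) (hν : Matrix.vecMul ν M = 0) {Z : Finset (Fin n)}
    (hZ : SignedZFS Q Z) (hνZ : ∀ j ∈ Z, ν j = 0) : ν = 0 := by
  obtain ⟨c, hreach, hall⟩ := hZ
  have hc := (isCompatible_initConfig hνZ).of_reflTransGen hQ hM hν hreach
  funext j
  exact hc.1 j (hall ▸ Finset.mem_univ j)

end SignedZeroForcing

section Eigenvectors

variable {m : Type*} [Fintype m] {A : Matrix m m ℝ} {lam : ℝ}

lemma vecMul_sub_smul_one_eq_zero [DecidableEq m] {ν : m → ℝ}
    (h : Matrix.vecMul ν A = lam • ν) :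
    Matrix.vecMul ν (A - lam • 1) = 0 := by
  rw [Matrix.vecMul_sub, Matrix.vecMul_smul, Matrix.vecMul_one, h, sub_self]

lemma vecMul_re_of_vecMul_map_ofReal {w : m → ℂ}
    (h : Matrix.vecMul w (A.map (Complex.ofReal ·)) = (lam : ℂ) • w) :
    Matrix.vecMul (fun i => (w i).re) A = lam • fun i => (w i).re := by
  funext j
  simpa [Matrix.vecMul, dotProduct, Complex.re_sum] using congrArg Complex.re (congrFun h j)

lemma vecMul_im_of_vecMul_map_ofReal {w : m → ℂ}
    (h : Matrix.vecMul w (A.map (Complex.ofReal ·)) = (lam : ℂ) • w) :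
    Matrix.vecMul (fun i => (w i).im) A = lam • fun i => (w i).im := by
  funext j
  simpa [Matrix.vecMul, dotProduct, Complex.im_sum] using congrArg Complex.im (congrFun h j)

end Eigenvectors

section NegLooped

variable {n : ℕ} {P : Fin n → Fin n → SignPatEntry}

lemma negLooped_ne_unk (hP : ∀ i j : Fin n, i ≠ j → P i j ≠ SignPatEntry.unk) {i j : Fin n}
    (hij : i ≠ j) : negLooped P i j ≠ SignPatEntry.unk := by
  simpa [negLooped, hij] using hP i j hij

lemma qClass_negLooped_sub_smul_one {A : Matrix (Fin n) (Fin n) ℝ} (hA : QClass P A)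
    {lam : ℝ} (hlam : 0 < lam) : QClass (negLooped P) (A - lam • 1) := by
  intro i j
  rcases eq_or_ne i j with rfl | hij
  · have hAii := hA i i
    simp only [negLooped, if_true, Matrix.sub_apply, Matrix.smul_apply, Matrix.one_apply_eq,
      smul_eq_mul, mul_one]
    cases h : P i i <;> simp_all [matchesSign]
    linarith
  · simpa [negLooped, hij, Matrix.one_apply_ne hij] using hA i j

end NegLooped

/-- If `V_C` is a positive signed zero forcing set of `P_s` (i.e. a signed
zero forcing set of the negative looped pattern `P_s⁻`), then every real left eigenvector
of any `A ∈ Q_s(P_s)` for a positive eigenvalue vanishing on `V_C` is zero; equivalently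
(PBH test), every positive eigenvalue of every `A ∈ Q_s(P_s)` is controllable for the
input set `V_C`. -/
theorem stmt3 {n : ℕ} (P : Fin n → Fin n → SignPatEntry)
    (hP : ∀ i j : Fin n, i ≠ j → P i j ≠ SignPatEntry.unk)
    (VC : Finset (Fin n)) (hVC : SignedZFS (negLooped P) VC) :
    (∀ A : Matrix (Fin n) (Fin n) ℝ, QClass P A →
      ∀ lam : ℝ, 0 < lam → ∀ ν : Fin n → ℝ,
        Matrix.vecMul ν A = lam • ν → (∀ j ∈ VC, ν j = 0) → ν = 0) ∧
    (∀ A : Matrix (Fin n) (Fin n) ℝ, QClass P A →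
      ∀ lam : ℝ, 0 < lam → ∀ w : Fin n → ℂ, w ≠ 0 →
        Matrix.vecMul w (A.map (Complex.ofReal ·)) = (lam : ℂ) • w →
        ∃ j ∈ VC, w j ≠ 0) := by
  have real_case : ∀ A : Matrix (Fin n) (Fin n) ℝ, QClass P A →
      ∀ lam : ℝ, 0 < lam → ∀ ν : Fin n → ℝ,
        Matrix.vecMul ν A = lam • ν → (∀ j ∈ VC, ν j = 0) → ν = 0 :=
    fun A hA lam hlam ν hν hνVC =>
      eq_zero_of_vecMul_eq_zero_of_signedZFS (fun _ _ => negLooped_ne_unk hP)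
        (qClass_negLooped_sub_smul_one hA hlam) (vecMul_sub_smul_one_eq_zero hν) hVC hνVC
  refine ⟨real_case, fun A hA lam hlam w hw hwA => ?_⟩
  by_contra! hwVC
  have hre := real_case A hA lam hlam _ (vecMul_re_of_vecMul_map_ofReal hwA)
    fun j hj => by simp [hwVC j hj]
  have him := real_case A hA lam hlam _ (vecMul_im_of_vecMul_map_ofReal hwA)
    fun j hj => by simp [hwVC j hj]
  exact hw (funext fun i => Complex.ext (congrFun hre i) (congrFun him i))
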